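/- Let S, Y be convex subsets of ℝ^d with nonempty interiors. Let φ, ψ : S → ℝ ∪ {+∞} be convex functions such that ∇φ : Int(S) → Int(Y) is continuous (φ differentiable on Int(S)) and ∇φ = ∇ψ Lebesgue-almost everywhere on Int(S). Then ψ is differentiable everywhere on Int(S) and ∇ψ(y) = ∇φ(y) for all y ∈ Int(S). -/

import Mathlib

/-!
Call a point `a ∈ Int S` good if `∂ψ(a) = {gφ a}`; good points are dense. Every point of `Int S`
is the midpoint of two good points (the null set of bad points and its reflection through the
point miss a small ball), and a singleton subdifferential forces finiteness, so `ψ` is finite,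
hence continuous, on `Int S`. The subgradient inequality at good points then passes to the limit:
`gφ x ∈ ∂ψ(x)` for every `x ∈ Int S`. Finally, if `ξ ∈ ∂ψ(x)`, monotonicity of `∂ψ` gives
`⟪gφ (x + t • v) - ξ, v⟫ ≥ 0` for small `t > 0`; letting `t → 0` with `v = ξ - gφ x` yields
`‖ξ - gφ x‖² ≤ 0` (Minty's trick).
-/

open scoped RealInnerProductSpace
open Filter

noncomputable section

abbrev E (d : ℕ) : Type := EuclideanSpace ℝ (Fin d)

/-- Subdifferential of a real-valued function at a point. -/
def subdiffR {d : ℕ} (f : E d → ℝ) (x : E d) : Set (E d) :=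
  {ξ | ∀ y : E d, f x + ⟪ξ, y - x⟫ ≤ f y}

/-- Subdifferential of an `EReal`-valued function at a point. -/
def subdiffE {d : ℕ} (f : E d → EReal) (x : E d) : Set (E d) :=
  {ξ | ∀ y : E d, f x + ((⟪ξ, y - x⟫ : ℝ) : EReal) ≤ f y}

/-- Convexity of an `EReal`-valued function. -/
def ConvexE {d : ℕ} (f : E d → EReal) : Prop :=
  ∀ x y : E d, ∀ a b : ℝ, 0 ≤ a → 0 ≤ b → a + b = 1 →
    f (a • x + b • y) ≤ (a : EReal) * f x + (b : EReal) * f y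
open MeasureTheory

open Set Topology

section Reflection

variable {F : Type*} [NormedAddCommGroup F] [NormedSpace ℝ F] [MeasurableSpace F] [BorelSpace F]
  [FiniteDimensional ℝ F] {μ : Measure F} [μ.IsAddHaarMeasure]

theorem exists_midpoint_eq_of_ae {U : Set F} (hU : IsOpen U) {p : F → Prop}
    (hp : ∀ᵐ x ∂μ, x ∈ U → p x) {w : F} (hw : w ∈ U) :
    ∃ u v, p u ∧ p v ∧ (1 / 2 : ℝ) • u + (1 / 2 : ℝ) • v = w := by
  obtain ⟨r, hr, hball⟩ := Metric.isOpen_iff.mp hU w hw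
  have hp' : ∀ᵐ x ∂μ, 2 • w - x ∈ U → p (2 • w - x) :=
    (Measure.measurePreserving_sub_left μ (2 • w)).quasiMeasurePreserving.ae hp
  obtain ⟨u, huw, hu, hv⟩ := (Measure.dense_of_ae (hp.and hp')).inter_open_nonempty _
    Metric.isOpen_ball ⟨w, Metric.mem_ball_self hr⟩
  have hvw : 2 • w - u ∈ Metric.ball w r := by
    rw [Metric.mem_ball, dist_eq_norm, ← norm_neg, show -(2 • w - u - w) = u - w by module]
    rwa [Metric.mem_ball, dist_eq_norm] at huw
  exact ⟨u, 2 • w - u, hu (hball huw), hv (hball hvw), by module⟩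

end Reflection

theorem eq_of_eventually_inner_sub_nonneg {F : Type*} [NormedAddCommGroup F]
    [InnerProductSpace ℝ F] {g : F → F} {x ξ : F} (hg : ContinuousAt g x)
    (h : ∀ᶠ a in 𝓝 x, 0 ≤ ⟪g a - ξ, a - x⟫) : ξ = g x := by
  set v := ξ - g x
  have hline : Tendsto (fun t : ℝ => x + t • v) (𝓝[>] 0) (𝓝 x) := by
    refine tendsto_nhdsWithin_of_tendsto_nhds ?_
    simpa using ((continuous_id.smul continuous_const).const_add x).tendsto (0 : ℝ)
  have hev : ∀ᶠ t in 𝓝[>] (0 : ℝ), 0 ≤ ⟪g (x + t • v) - ξ, v⟫ := by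
    filter_upwards [hline.eventually h, self_mem_nhdsWithin] with t ht (htpos : 0 < t)
    rw [add_sub_cancel_left, real_inner_smul_right] at ht
    exact nonneg_of_mul_nonneg_right ht htpos
  have hlim : Tendsto (fun t : ℝ => ⟪g (x + t • v) - ξ, v⟫) (𝓝[>] 0) (𝓝 ⟪g x - ξ, v⟫) :=
    ((hg.tendsto.comp hline).sub_const ξ).inner tendsto_const_nhds
  have hv : 0 ≤ -‖v‖ ^ 2 := by
    rw [← real_inner_self_eq_norm_sq, ← inner_neg_left, neg_sub]
    exact ge_of_tendsto hlim hev
  have hv0 : ‖v‖ = 0 := by nlinarith [norm_nonneg v]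
  exact sub_eq_zero.1 (norm_eq_zero.1 hv0)

namespace ConvexE

variable {d : ℕ} {ψ : E d → EReal}

theorem midpoint_ne_top (hψ : ConvexE ψ) {u v : E d} (hu : ψ u ≠ ⊤) (hv : ψ v ≠ ⊤) :
    ψ ((1 / 2 : ℝ) • u + (1 / 2 : ℝ) • v) ≠ ⊤ := by
  have half_mul_ne_top : ∀ z : EReal, z ≠ ⊤ → ((1 / 2 : ℝ) : EReal) * z ≠ ⊤ := fun z hz =>
    (EReal.mul_ne_top _ _).2 ⟨.inl (EReal.coe_ne_bot _), .inl (EReal.coe_nonneg.2 (by norm_num)),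
      .inl (EReal.coe_ne_top _), .inr hz⟩
  exact ne_top_of_le_ne_top (EReal.add_ne_top (half_mul_ne_top _ hu) (half_mul_ne_top _ hv))
    (hψ u v _ _ (by norm_num) (by norm_num) (by norm_num))

theorem convexOn_toReal (hψ : ConvexE ψ) (hbot : ∀ x, ψ x ≠ ⊥) {s : Set (E d)}
    (hs : Convex ℝ s) (hfin : ∀ x ∈ s, ψ x ≠ ⊤) : ConvexOn ℝ s fun x => (ψ x).toReal := by
  refine ⟨hs, fun x hx y hy a b ha hb hab => ?_⟩
  have h := hψ x y a b ha hb hab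
  rw [← EReal.coe_toReal (hfin _ (hs hx hy ha hb hab)) (hbot _),
    ← EReal.coe_toReal (hfin x hx) (hbot x), ← EReal.coe_toReal (hfin y hy) (hbot y),
    ← EReal.coe_mul, ← EReal.coe_mul, ← EReal.coe_add, EReal.coe_le_coe_iff] at h
  exact h

theorem continuousOn_toReal (hψ : ConvexE ψ) (hbot : ∀ x, ψ x ≠ ⊥) {U : Set (E d)}
    (hU : IsOpen U) (hfin : ∀ x ∈ U, ψ x ≠ ⊤) : ContinuousOn (fun x => (ψ x).toReal) U := by
  intro x hx
  obtain ⟨r, hr, hball⟩ := Metric.isOpen_iff.mp hU x hx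
  have hconv := hψ.convexOn_toReal hbot (convex_ball x r) fun y hy => hfin y (hball hy)
  exact ((hconv.continuousOn Metric.isOpen_ball).continuousAt
    (Metric.ball_mem_nhds x hr)).continuousWithinAt

end ConvexE

section Subdifferential

variable {d : ℕ} {ψ : E d → EReal}

theorem subdiffE_eq_singleton_of_subsingleton [Subsingleton (E d)] (x ξ : E d) :
    subdiffE ψ x = {ξ} := by
  refine eq_singleton_iff_unique_mem.2 ⟨fun y => ?_, fun η _ => Subsingleton.elim η ξ⟩
  rw [Subsingleton.elim y x, sub_self, inner_zero_right, EReal.coe_zero, add_zero]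

theorem subdiffE_eq_univ_of_eq_top {a : E d} (hne : (subdiffE ψ a).Nonempty) (ha : ψ a = ⊤) :
    subdiffE ψ a = univ := by
  obtain ⟨ξ, hξ⟩ := hne
  have htop : ∀ y, ψ y = ⊤ := fun y => top_le_iff.1 (by simpa [ha] using hξ y)
  refine eq_univ_of_forall fun η y => ?_
  rw [htop y]
  exact le_top

theorem ne_top_of_subdiffE_eq_singleton [Nontrivial (E d)] {a ξ : E d}
    (h : subdiffE ψ a = {ξ}) : ψ a ≠ ⊤ := fun ha =>
  singleton_ne_univ ξ (h ▸ subdiffE_eq_univ_of_eq_top (h ▸ singleton_nonempty ξ) ha)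

theorem mem_subdiffE_iff_toReal (hbot : ∀ x, ψ x ≠ ⊥) {x ξ : E d} (hx : ψ x ≠ ⊤) :
    ξ ∈ subdiffE ψ x ↔ ∀ y, ψ y ≠ ⊤ → (ψ x).toReal + ⟪ξ, y - x⟫ ≤ (ψ y).toReal := by
  refine forall_congr' fun y => ?_
  by_cases hy : ψ y = ⊤
  · simp [hy]
  rw [imp_iff_right hy, ← EReal.coe_le_coe_iff, EReal.coe_add, EReal.coe_toReal hx (hbot x),
    EReal.coe_toReal hy (hbot y)]

theorem inner_sub_nonneg_of_mem_subdiffE (hbot : ∀ x, ψ x ≠ ⊥) {x a ξ η : E d}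
    (hx : ψ x ≠ ⊤) (ha : ψ a ≠ ⊤) (hξ : ξ ∈ subdiffE ψ x) (hη : η ∈ subdiffE ψ a) :
    0 ≤ ⟪η - ξ, a - x⟫ := by
  have hxa := (mem_subdiffE_iff_toReal hbot hx).1 hξ a ha
  have hax := (mem_subdiffE_iff_toReal hbot ha).1 hη x hx
  rw [← neg_sub a x, inner_neg_right] at hax
  rw [inner_sub_left]
  linarith

theorem mem_subdiffE_of_mem_closure (hbot : ∀ x, ψ x ≠ ⊥) {G : Set (E d)} {g : E d → E d}
    {x : E d} (hx : x ∈ closure G) (hxfin : ψ x ≠ ⊤) (hGfin : ∀ a ∈ G, ψ a ≠ ⊤)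
    (hψ : ContinuousWithinAt (fun a => (ψ a).toReal) G x) (hg : ContinuousWithinAt g G x)
    (hG : ∀ a ∈ G, g a ∈ subdiffE ψ a) : g x ∈ subdiffE ψ x := by
  refine (mem_subdiffE_iff_toReal hbot hxfin).2 fun y hy => ?_
  exact ContinuousWithinAt.closure_le hx
    (hψ.add (hg.inner (continuousWithinAt_const.sub continuousWithinAt_id)))
    continuousWithinAt_const fun a ha =>
      (mem_subdiffE_iff_toReal hbot (hGfin a ha)).1 (hG a ha) y hy

end Subdifferential

theorem statement17_general {d : ℕ} (S : Set (E d)) (ψ : E d → EReal) (hψ : ConvexE ψ)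
    (hbotψ : ∀ x, ψ x ≠ ⊥) (gφ : E d → E d)
    (hcont : ContinuousOn gφ (interior S))
    (hae : ∀ᵐ x ∂(volume : Measure (E d)), x ∈ interior S → subdiffE ψ x = {gφ x}) :
    ∀ x ∈ interior S, subdiffE ψ x = {gφ x} := by
  intro x hx
  rcases subsingleton_or_nontrivial (E d) with _ | _
  · exact subdiffE_eq_singleton_of_subsingleton x (gφ x)
  have hU : IsOpen (interior S) := isOpen_interior
  have hfin : ∀ w ∈ interior S, ψ w ≠ ⊤ := by
    intro w hw
    obtain ⟨u, v, hu, hv, rfl⟩ := exists_midpoint_eq_of_ae hU hae hw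
    exact hψ.midpoint_ne_top (ne_top_of_subdiffE_eq_singleton hu)
      (ne_top_of_subdiffE_eq_singleton hv)
  have hsub : ∀ a ∈ interior S, gφ a ∈ subdiffE ψ a := by
    intro a ha
    refine mem_subdiffE_of_mem_closure hbotψ
      ((Measure.dense_of_ae hae).open_subset_closure_inter hU ha) (hfin a ha)
      (fun b hb => hfin b hb.1) ?_ (hcont.continuousAt (hU.mem_nhds ha)).continuousWithinAt
      fun b hb => (hb.2 hb.1).symm ▸ mem_singleton (gφ b)
    exact ((hψ.continuousOn_toReal hbotψ hU hfin).continuousAt (hU.mem_nhds ha)).continuousWithinAt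
  refine eq_singleton_iff_unique_mem.2 ⟨hsub x hx, fun ξ hξ => ?_⟩
  refine eq_of_eventually_inner_sub_nonneg (hcont.continuousAt (hU.mem_nhds hx)) ?_
  filter_upwards [hU.mem_nhds hx] with a ha
  exact inner_sub_nonneg_of_mem_subdiffE hbotψ (hfin x hx) (hfin a ha) hξ (hsub a ha)

/-- Convex `φ, ψ : S → ℝ ∪ {+∞}` (S, Y convex with nonempty interiors) with
`φ` differentiable on `Int S`, `∇φ : Int S → Int Y` continuous, and `∇φ = ∇ψ`
Lebesgue-a.e. on `Int S`. Then `ψ` is differentiable everywhere on `Int S` and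
`∇ψ = ∇φ` there (expressed via singleton subdifferentials). -/
theorem statement17 {d : ℕ} (S Y : Set (E d)) (hS : Convex ℝ S) (hY : Convex ℝ Y)
    (hSne : (interior S).Nonempty) (hYne : (interior Y).Nonempty)
    (φ ψ : E d → EReal) (hφ : ConvexE φ) (hψ : ConvexE ψ)
    (hbotφ : ∀ x, φ x ≠ ⊥) (hbotψ : ∀ x, ψ x ≠ ⊥)
    (gφ : E d → E d) (hφdiff : ∀ x ∈ interior S, subdiffE φ x = {gφ x})
    (hcont : ContinuousOn gφ (interior S))
    (hmaps : Set.MapsTo gφ (interior S) (interior Y))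
    (hae : ∀ᵐ x ∂(volume : Measure (E d)), x ∈ interior S → subdiffE ψ x = {gφ x}) :
    ∀ x ∈ interior S, subdiffE ψ x = {gφ x} :=
  statement17_general S ψ hψ hbotψ gφ hcont hae
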